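/- Slice cardinality comparison for zwickels: fix positive integers w, e, c with e = wc, and q = r + ℓ ∈ ℕ^m decomposed with disjoint supports. For 0 ≤ k ≤ c, the number of β ∈ ℕ^m with wk + |β| = e and β ≥ (⌈((c−k)/c)|r|⌉, 0,...,0, ⌈((c−k)/c)q_j⌉, ..., ⌈((c−k)/c)q_1⌉) componentwise is at least the number of α ∈ ℕ^m with wk + |α| = e and α ≥ ⌈((c−k)/c)·(q_m,...,q_1)⌉ componentwise. -/

import Mathlib

/-!
Since the `αᵢ` are natural numbers, an integer lower bound `B` may be replaced by `max B 0`;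
then both sets become slices `{α | |α| = n, α ≥ b}` of the standard simplex with `n = e - wk`. Translating by `b' - b`
shows that the size of such a slice only depends on `|b|` and can only grow when `|b|` drops.
And the bounds of the second set have the smaller total: subadditivity of the ceiling gives
`⌈u|r|⌉₊ ≤ ∑_{i ≥ j} ⌈u qᵢ⌉₊`, while the bounds at the indices `i < j` agree.
-/

open Finset

theorem Nat.ceil_sum_le {ι R : Type*} [Semiring R] [LinearOrder R] [IsStrictOrderedRing R]
    [FloorSemiring R] (s : Finset ι) (f : ι → R) : ⌈∑ i ∈ s, f i⌉₊ ≤ ∑ i ∈ s, ⌈f i⌉₊ :=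
  le_sum_of_subadditive _ Nat.ceil_zero.le Nat.ceil_add_le s f

namespace Zwickel

variable {ι : Type*} [Fintype ι]

def slice (n : ℕ) (b : ι → ℕ) : Set (ι → ℕ) := {α | ∑ i, α i = n ∧ b ≤ α}

theorem slice_finite (n : ℕ) (b : ι → ℕ) : (slice n b).Finite := by
  classical
  refine (piAntidiag univ n).finite_toSet.subset fun α hα => ?_
  simpa using hα.1

theorem slice_subset_slice {n : ℕ} {b b' : ι → ℕ} (h : b' ≤ b) : slice n b ⊆ slice n b' :=
  fun _ hα => ⟨hα.1, h.trans hα.2⟩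

theorem ncard_slice_le_of_sum_eq {n : ℕ} {b b' : ι → ℕ} (h : ∑ i, b' i = ∑ i, b i) :
    (slice n b).ncard ≤ (slice n b').ncard := by
  refine Set.ncard_le_ncard_of_injOn (fun α => α - b + b') ?_ ?_ (slice_finite n b')
  · rintro α ⟨hsum, hle⟩
    refine ⟨?_, fun i => Nat.le_add_left _ _⟩
    have hsub : ∑ i, (α - b) i + ∑ i, b i = ∑ i, α i := by
      rw [← sum_add_distrib]
      exact sum_congr rfl fun i _ => Nat.sub_add_cancel (hle i)
    simp only [Pi.add_apply, sum_add_distrib]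
    omega
  · rintro α ⟨-, hα⟩ α' ⟨-, hα'⟩ heq
    funext i
    have hi := congrFun heq i
    simp only [Pi.add_apply, Pi.sub_apply] at hi
    have h₁ : b i ≤ α i := hα i
    have h₂ : b i ≤ α' i := hα' i
    omega

theorem ncard_slice_le_of_sum_le [Nonempty ι] {n : ℕ} {b b' : ι → ℕ}
    (h : ∑ i, b' i ≤ ∑ i, b i) : (slice n b).ncard ≤ (slice n b').ncard := by
  classical
  let b'' := b' + Pi.single (Classical.arbitrary ι) (∑ i, b i - ∑ i, b' i)
  have hsum : ∑ i, b'' i = ∑ i, b i := by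
    simp only [b'', Pi.add_apply, sum_add_distrib, sum_pi_single', mem_univ, if_true]
    omega
  calc (slice n b).ncard ≤ (slice n b'').ncard := ncard_slice_le_of_sum_eq hsum
    _ ≤ (slice n b').ncard :=
      Set.ncard_le_ncard (slice_subset_slice fun i => Nat.le_add_right _ _) (slice_finite n b')

theorem setOf_add_sum_eq_and_forall_le {s n : ℕ} (hs : s ≤ n) (B : ι → ℤ) :
    {α : ι → ℕ | s + ∑ i, α i = n ∧ ∀ i, B i ≤ α i} = slice (n - s) fun i => (B i).toNat := by
  ext α
  simp only [slice, Set.mem_ofPred_eq, Pi.le_def, Int.toNat_le]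
  constructor <;> rintro ⟨h, hB⟩ <;> exact ⟨by omega, hB⟩

theorem sum_toNat_collapsedBound_le {m j : ℕ} (hj : j < m) (u : ℚ) (q : Fin m → ℕ) :
    ∑ i : Fin m, (if (i : ℕ) = m - 1 then
        ⌈u * ((∑ i' ∈ univ.filter fun i' : Fin m => j ≤ (i' : ℕ), q i' : ℕ) : ℚ)⌉
      else if (i : ℕ) < j then ⌈u * (q i : ℚ)⌉ else 0).toNat ≤
      ∑ i, ⌈u * (q i : ℚ)⌉.toNat := by
  rw [← sum_filter_add_sum_filter_not univ fun i : Fin m => j ≤ (i : ℕ),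
    ← sum_filter_add_sum_filter_not univ (fun i : Fin m => j ≤ (i : ℕ))
      fun i => ⌈u * (q i : ℚ)⌉.toNat]
  refine add_le_add ?_ (sum_congr rfl fun i hi => ?_).le
  · rw [sum_eq_single_of_mem (⟨m - 1, by omega⟩ : Fin m) (by simp; omega) fun i hi hne => by
      simp only [mem_filter, mem_univ, true_and] at hi
      rw [if_neg fun h => hne (Fin.ext h), if_neg (by omega), Int.toNat_zero]]
    simp only [if_true, Int.ceil_toNat, Nat.cast_sum, mul_sum]
    exact Nat.ceil_sum_le _ _
  · simp only [mem_filter, mem_univ, true_and, not_le] at hi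
    rw [if_neg (by omega), if_pos hi]

end Zwickel

theorem stmt17_general (w c e m j k : ℕ) (he : e = w * c)
    (hj : j < m) (hk : k ≤ c) (q : Fin m → ℕ) :
    Set.ncard {α : Fin m → ℕ | w * k + (∑ i, α i) = e ∧
        ∀ i : Fin m, ⌈((c - k : ℚ) / c) * (q i : ℚ)⌉ ≤ (α i : ℤ)} ≤
      Set.ncard {β : Fin m → ℕ | w * k + (∑ i, β i) = e ∧
        ∀ i : Fin m,
          (if (i : ℕ) = m - 1 then
              ⌈((c - k : ℚ) / c) *
                ((∑ i' ∈ Finset.univ.filter fun i' : Fin m => j ≤ (i' : ℕ), q i' : ℕ) : ℚ)⌉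
            else if (i : ℕ) < j then ⌈((c - k : ℚ) / c) * (q i : ℚ)⌉ else 0) ≤ (β i : ℤ)} := by
  have hwk : w * k ≤ e := he ▸ Nat.mul_le_mul_left w hk
  have : Nonempty (Fin m) := ⟨⟨j, hj⟩⟩
  rw [Zwickel.setOf_add_sum_eq_and_forall_le hwk, Zwickel.setOf_add_sum_eq_and_forall_le hwk]
  exact Zwickel.ncard_slice_le_of_sum_le (Zwickel.sum_toNat_collapsedBound_le hj _ q)

/-- Slice cardinality comparison for zwickels. With `e = wc`,
`0 ≤ k ≤ c`, `q ∈ ℕ^m` decomposed as `q = r + ℓ` where `r = (q_m,...,q_{j+1},0,...,0)`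
(indices `i ≥ j`) and `ℓ = (0,...,0,q_j,...,q_1)` (indices `i < j`), the slice of the
lower zwickel `Y(r,ℓ)` (bound `⌈u|r|⌉` at the top index `m-1`, `⌈u·q_i⌉` for `i < j`,
`0` elsewhere, `u = (c-k)/c`) has at least as many elements as the slice of the upper
zwickel `Z(q)` (bound `⌈u·q_i⌉` at every index). -/
theorem stmt17 (w c e m j k : ℕ) (hw : 0 < w) (hc : 0 < c) (he : e = w * c)
    (hm : 0 < m) (hj : j < m) (hk : k ≤ c) (q : Fin m → ℕ) :
    Set.ncard {α : Fin m → ℕ | w * k + (∑ i, α i) = e ∧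
        ∀ i : Fin m, ⌈((c - k : ℚ) / c) * (q i : ℚ)⌉ ≤ (α i : ℤ)} ≤
      Set.ncard {β : Fin m → ℕ | w * k + (∑ i, β i) = e ∧
        ∀ i : Fin m,
          (if (i : ℕ) = m - 1 then
              ⌈((c - k : ℚ) / c) *
                ((∑ i' ∈ Finset.univ.filter fun i' : Fin m => j ≤ (i' : ℕ), q i' : ℕ) : ℚ)⌉
            else if (i : ℕ) < j then ⌈((c - k : ℚ) / c) * (q i : ℚ)⌉ else 0) ≤ (β i : ℤ)} :=
  stmt17_general w c e m j k he hj hk q
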